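/- Let Ω be a finite set and let P and Q be partitions of Ω such that Q refines P. Then there exists a finite chain of partitions P = P₀, P₁, …, P_n = Q such that each P_{i+1} refines P_i and each step P_i → P_{i+1} is atomic: exactly one block of P_i is subdivided into two or more blocks, and all other blocks of P_i remain blocks of P_{i+1}. -/

import Mathlib

/-- A partition of a finite set: nonempty, pairwise disjoint blocks covering `Ω`. -/
def IsPartition {Ω : Type*} (P : Finset (Set Ω)) : Prop :=
  (∀ A ∈ P, A.Nonempty) ∧
  (∀ A ∈ P, ∀ B ∈ P, A ≠ B → Disjoint A B) ∧
  ⋃₀ (P : Set (Set Ω)) = Set.univ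

/-- `Q` refines `P`: every block of `Q` is contained in a block of `P`. -/
def Refines {Ω : Type*} (Q P : Finset (Set Ω)) : Prop :=
  ∀ B ∈ Q, ∃ A ∈ P, B ⊆ A

open Classical in
/-- An atomic refinement step: `Q` refines `P`, exactly one block `A` of `P` is
subdivided into at least two blocks of `Q`, and every other block of `P`
remains a block of `Q`. -/
def AtomicStep {Ω : Type*} (P Q : Finset (Set Ω)) : Prop :=
  Refines Q P ∧
  ∃ A ∈ P, A ∉ Q ∧ (∀ B ∈ P, B ≠ A → B ∈ Q) ∧
    2 ≤ (Q.filter (fun B => B ⊆ A)).card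

/-!
Split the blocks of `P` that are not blocks of `Q` one at a time. Replacing such a block `A` by
the blocks of `Q` contained in it gives a partition still refined by `Q`, and the step is atomic:
there are at least two such blocks, since a single one would cover `A` and equal it. Each step
lowers the number of blocks of the current partition that are not blocks of `Q`.
-/

open Classical Finset

theorem Relation.ReflTransGen.exists_fin_chain {α : Type*} {r : α → α → Prop} {a b : α}
    (h : Relation.ReflTransGen r a b) :
    ∃ (n : ℕ) (c : Fin (n + 1) → α),
      c 0 = a ∧ c (Fin.last n) = b ∧ ∀ i : Fin n, r (c i.castSucc) (c i.succ) := by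
  induction h using Relation.ReflTransGen.head_induction_on with
  | refl => exact ⟨0, fun _ => b, rfl, rfl, Fin.elim0⟩
  | head hac _ ih =>
    obtain ⟨n, c, hc0, hcl, hstep⟩ := ih
    refine ⟨n + 1, Fin.cons _ c, rfl, by rw [← Fin.succ_last, Fin.cons_succ, hcl], ?_⟩
    intro i
    cases i using Fin.cases with
    | zero => simpa only [Fin.castSucc_zero, Fin.cons_zero, Fin.cons_succ, hc0] using hac
    | succ j => simpa [← Fin.succ_castSucc] using hstep j

section

variable {Ω : Type*} {P Q : Finset (Set Ω)} {A : Set Ω}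

theorem IsPartition.exists_mem (hP : IsPartition P) (x : Ω) : ∃ A ∈ P, x ∈ A := by
  have hx : x ∈ ⋃₀ (P : Set (Set Ω)) := hP.2.2 ▸ Set.mem_univ x
  simpa using hx

theorem IsPartition.eq_of_mem_of_mem (hP : IsPartition P) {A B : Set Ω} (hA : A ∈ P)
    (hB : B ∈ P) {x : Ω} (hxA : x ∈ A) (hxB : x ∈ B) : A = B := by
  by_contra hAB
  exact Set.disjoint_left.mp (hP.2.1 A hA B hB hAB) hxA hxB

theorem IsPartition.eq_of_subset (hP : IsPartition P) (hQ : IsPartition Q) (h : P ⊆ Q) :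
    P = Q := by
  refine h.antisymm fun B hB => ?_
  obtain ⟨x, hxB⟩ := hQ.1 B hB
  obtain ⟨A, hA, hxA⟩ := hP.exists_mem x
  rwa [hQ.eq_of_mem_of_mem hB (h hA) hxB hxA]

theorem Refines.exists_mem_subset_of_mem (href : Refines Q P) (hP : IsPartition P)
    (hQ : IsPartition Q) (hA : A ∈ P) {x : Ω} (hx : x ∈ A) :
    ∃ B ∈ Q, B ⊆ A ∧ x ∈ B := by
  obtain ⟨B, hB, hxB⟩ := hQ.exists_mem x
  obtain ⟨A', hA', hBA'⟩ := href B hB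
  exact ⟨B, hB, hP.eq_of_mem_of_mem hA' hA (hBA' hxB) hx ▸ hBA', hxB⟩

theorem Refines.two_le_card_filter_subset (href : Refines Q P) (hP : IsPartition P)
    (hQ : IsPartition Q) (hA : A ∈ P) (hAQ : A ∉ Q) : 2 ≤ #(Q.filter (· ⊆ A)) := by
  by_contra! hcard
  obtain ⟨x, hx⟩ := hP.1 A hA
  obtain ⟨B, hB, hBA, -⟩ := href.exists_mem_subset_of_mem hP hQ hA hx
  -- A block of `Q` inside `A` is unique, so it covers `A`.
  have hAB : A ⊆ B := fun y hy => by
    obtain ⟨B', hB', hB'A, hyB'⟩ := href.exists_mem_subset_of_mem hP hQ hA hy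
    rwa [Finset.card_le_one.mp (Nat.le_of_lt_succ hcard) B' (by simp [hB', hB'A]) B
      (by simp [hB, hBA])] at hyB'
  exact hAQ (hBA.antisymm hAB ▸ hB)

noncomputable def splitBlock (P Q : Finset (Set Ω)) (A : Set Ω) : Finset (Set Ω) :=
  P.erase A ∪ Q.filter (· ⊆ A)

theorem Refines.splitBlock (href : Refines Q P) : Refines Q (splitBlock P Q A) := by
  intro B hB
  obtain ⟨A', hA', hBA'⟩ := href B hB
  by_cases h : A' = A
  · exact ⟨B, mem_union_right _ (mem_filter.mpr ⟨hB, h ▸ hBA'⟩), subset_rfl⟩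
  · exact ⟨A', mem_union_left _ (mem_erase.mpr ⟨h, hA'⟩), hBA'⟩

theorem IsPartition.splitBlock (hP : IsPartition P) (hQ : IsPartition Q) (href : Refines Q P)
    (hA : A ∈ P) : IsPartition (splitBlock P Q A) := by
  refine ⟨?_, ?_, ?_⟩
  · intro B hB
    rcases mem_union.mp hB with hB | hB
    · exact hP.1 B (mem_of_mem_erase hB)
    · exact hQ.1 B (mem_of_mem_filter B hB)
  · intro B hB C hC hBC
    rcases mem_union.mp hB with hB | hB <;> rcases mem_union.mp hC with hC | hC
    · exact hP.2.1 B (mem_of_mem_erase hB) C (mem_of_mem_erase hC) hBC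
    · exact (hP.2.1 B (mem_of_mem_erase hB) A hA (ne_of_mem_erase hB)).mono_right
        (mem_filter.mp hC).2
    · exact (hP.2.1 A hA C (mem_of_mem_erase hC) (ne_of_mem_erase hC).symm).mono_left
        (mem_filter.mp hB).2
    · exact hQ.2.1 B (mem_of_mem_filter B hB) C (mem_of_mem_filter C hC) hBC
  · refine Set.eq_univ_of_forall fun x => ?_
    obtain ⟨A', hA', hxA'⟩ := hP.exists_mem x
    by_cases h : A' = A
    · obtain ⟨B, hB, hBA, hxB⟩ := href.exists_mem_subset_of_mem hP hQ hA (h ▸ hxA')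
      exact ⟨B, mem_union_right _ (mem_filter.mpr ⟨hB, hBA⟩), hxB⟩
    · exact ⟨A', mem_union_left _ (mem_erase.mpr ⟨h, hA'⟩), hxA'⟩

theorem atomicStep_splitBlock (hP : IsPartition P) (hQ : IsPartition Q) (href : Refines Q P)
    (hA : A ∈ P) (hAQ : A ∉ Q) : AtomicStep P (splitBlock P Q A) := by
  refine ⟨?_, A, hA, ?_, fun B hB hBA => mem_union_left _ (mem_erase.mpr ⟨hBA, hB⟩), ?_⟩
  · intro B hB
    rcases mem_union.mp hB with hB | hB
    · exact ⟨B, mem_of_mem_erase hB, subset_rfl⟩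
    · exact ⟨A, hA, (mem_filter.mp hB).2⟩
  · simp [splitBlock, hAQ]
  · refine (href.two_le_card_filter_subset hP hQ hA hAQ).trans (card_le_card fun B hB => ?_)
    exact mem_filter.mpr ⟨mem_union_right _ hB, (mem_filter.mp hB).2⟩

theorem card_sdiff_splitBlock_lt (hA : A ∈ P) (hAQ : A ∉ Q) :
    #(splitBlock P Q A \ Q) < #(P \ Q) := by
  refine (card_le_card fun B hB => ?_).trans_lt <|
    card_erase_lt_of_mem (mem_sdiff.mpr ⟨hA, hAQ⟩)
  simp only [splitBlock, mem_sdiff, mem_union, mem_erase, mem_filter] at hB ⊢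
  tauto

theorem IsPartition.reflTransGen_atomicStep (hP : IsPartition P) (hQ : IsPartition Q)
    (href : Refines Q P) :
    Relation.ReflTransGen
      (fun P' Q' : {P : Finset (Set Ω) // IsPartition P} => AtomicStep P'.1 Q'.1)
      ⟨P, hP⟩ ⟨Q, hQ⟩ := by
  induction hm : #(P \ Q) using Nat.strong_induction_on generalizing P with
  | _ m ih =>
    by_cases hPQ : P ⊆ Q
    · obtain rfl := hP.eq_of_subset hQ hPQ
      exact .refl
    obtain ⟨A, hA, hAQ⟩ := not_subset.mp hPQ
    exact .head (atomicStep_splitBlock hP hQ href hA hAQ) <|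
      ih _ (hm ▸ card_sdiff_splitBlock_lt hA hAQ) (hP.splitBlock hQ href hA) href.splitBlock rfl

end

theorem refinement_decomposes_into_atomic_steps_general
    {Ω : Type*}
    (P Q : Finset (Set Ω)) (hP : IsPartition P) (hQ : IsPartition Q)
    (href : Refines Q P) :
    ∃ (n : ℕ) (c : Fin (n + 1) → Finset (Set Ω)),
      c 0 = P ∧ c (Fin.last n) = Q ∧
      (∀ i, IsPartition (c i)) ∧
      (∀ i : Fin n, AtomicStep (c i.castSucc) (c i.succ)) := by
  obtain ⟨n, c, hc0, hcl, hstep⟩ := (hP.reflTransGen_atomicStep hQ href).exists_fin_chain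
  exact ⟨n, fun i => (c i).1, congrArg Subtype.val hc0, congrArg Subtype.val hcl,
    fun i => (c i).2, hstep⟩

/-- every refinement of partitions of a finite set decomposes into a
finite chain of atomic refinement steps. -/
theorem refinement_decomposes_into_atomic_steps
    {Ω : Type*} [Fintype Ω]
    (P Q : Finset (Set Ω)) (hP : IsPartition P) (hQ : IsPartition Q)
    (href : Refines Q P) :
    ∃ (n : ℕ) (c : Fin (n + 1) → Finset (Set Ω)),
      c 0 = P ∧ c (Fin.last n) = Q ∧
      (∀ i, IsPartition (c i)) ∧
      (∀ i : Fin n, AtomicStep (c i.castSucc) (c i.succ)) :=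
  refinement_decomposes_into_atomic_steps_general P Q hP hQ href
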